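/- arXiv:math/0203133 — 5 statements merged into one kernel-verified Lean document; each statement's English description precedes it below -/
import Mathlib

section
/- Let V be a finite-dimensional real inner product space, ω a linear isometry of V with ω^N = id_V (N ≥ 1), and Γ a lattice in V with ω(Γ) = Γ. Let V_ω = {v ∈ V : ω(v) = v} and P_ω = (1/N)(id + ω + ⋯ + ω^{N−1}). Then the image P_ω(Γ) equals the set {x ∈ V_ω : (x, β) ∈ ℤ for all β ∈ Γ^∨ with ω(β) = β}; in other words, P_ω restricts to a surjective map from Γ onto the lattice in V_ω dual to the fixed sublattice (Γ^∨)_ω = Γ^∨ ∩ V_ω. -/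
/-!
The averaging operator `P` is a projection of `V` onto the fixed subspace `V_ω`, and
`⟪β, P v⟫ = ⟪β, v⟫` for `ω`-fixed `β` because `ω` is an isometry. Hence `Λ = P(Γ)` spans `V_ω`,
is discrete because `N • Λ ⊆ Γ`, and its dual lattice inside `V_ω` is `Γ^∨ ∩ V_ω`; the theorem is
then the biduality `Λ = (Λ^∨)^∨` of the lattice `Λ` in `V_ω`.
-/

open scoped RealInnerProductSpace
open Finset

namespace Module.End

variable {K V : Type*} [Field K] [AddCommGroup V] [Module K V]

noncomputable def average (f : Module.End K V) (N : ℕ) : Module.End K V :=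
  (N : K)⁻¹ • ∑ i ∈ range N, f ^ i

variable {f : Module.End K V} {N : ℕ}

theorem average_apply (v : V) : f.average N v = (N : K)⁻¹ • ∑ i ∈ range N, (f ^ i) v := by
  simp [average, LinearMap.sum_apply]

theorem natCast_smul_average_apply [CharZero K] (hN : N ≠ 0) (v : V) :
    (N : K) • f.average N v = ∑ i ∈ range N, (f ^ i) v := by
  rw [average_apply, smul_inv_smul₀ (Nat.cast_ne_zero.mpr hN)]

theorem pow_apply_of_apply_eq {v : V} (hv : f v = v) (i : ℕ) : (f ^ i) v = v := by
  rw [pow_apply, Function.iterate_fixed hv]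

theorem average_apply_of_apply_eq [CharZero K] (hN : N ≠ 0) {v : V} (hv : f v = v) :
    f.average N v = v := by
  rw [average_apply, sum_congr rfl fun i _ => pow_apply_of_apply_eq hv i, sum_const, card_range,
    ← Nat.cast_smul_eq_nsmul K, inv_smul_smul₀ (Nat.cast_ne_zero.mpr hN)]

theorem apply_average (hf : f ^ N = 1) (v : V) : f (f.average N v) = f.average N v := by
  have hshift : ∑ i ∈ range N, (f ^ (i + 1)) v = ∑ i ∈ range N, (f ^ i) v := by
    refine add_right_cancel (b := (f ^ 0) v) ?_
    rw [← sum_range_succ' (fun i => (f ^ i) v), sum_range_succ, hf, pow_zero]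
  simp only [average_apply, map_smul, map_sum, ← mul_apply, ← pow_succ', hshift]

theorem mem_range_average_iff [CharZero K] (hN : N ≠ 0) (hf : f ^ N = 1) {v : V} :
    v ∈ LinearMap.range (f.average N) ↔ f v = v := by
  refine ⟨?_, fun hv => ⟨v, average_apply_of_apply_eq hN hv⟩⟩
  rintro ⟨w, rfl⟩
  exact apply_average hf w

end Module.End

theorem LinearIsometryEquiv.toLinearMap_pow {R E : Type*} [Semiring R]
    [SeminormedAddCommGroup E] [Module R E] (ω : E ≃ₗᵢ[R] E) (n : ℕ) :
    ((ω ^ n : E ≃ₗᵢ[R] E) : Module.End R E) = (ω : Module.End R E) ^ n := by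
  induction n with
  | zero => rfl
  | succ n ih => rw [pow_succ, pow_succ, ← ih]; rfl

theorem DiscreteTopology.of_smul_mem {𝕜 E : Type*} [NormedField 𝕜] [NormedAddCommGroup E]
    [NormedSpace 𝕜 E] {s t : Set E} [DiscreteTopology s] {c : 𝕜} (hc : c ≠ 0)
    (h : ∀ x ∈ t, c • x ∈ s) :
    DiscreteTopology t :=
  have := DiscreteTopology.preimage_of_continuous_injective s (continuous_const_smul c)
    (smul_right_injective E hc)
  .of_subset this h

section DualLattice

variable {E : Type*} [NormedAddCommGroup E] [InnerProductSpace ℝ E]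

theorem mem_dualSubmodule_innerₗ_iff {L : Submodule ℤ E} {β : E} :
    β ∈ LinearMap.BilinForm.dualSubmodule (innerₗ E) L ↔ ∀ y ∈ L, ∃ n : ℤ, ⟪β, y⟫ = n := by
  simp only [LinearMap.BilinForm.mem_dualSubmodule, Submodule.mem_one, innerₗ_apply_apply,
    eq_intCast, eq_comm]

theorem nondegenerate_innerₗ : (innerₗ E).Nondegenerate :=
  ⟨fun u hu => inner_self_eq_zero.mp (hu u), fun u hu => inner_self_eq_zero.mp (hu u)⟩

variable [FiniteDimensional ℝ E]

theorem ZLattice.mem_iff_forall_inner_int (L : Submodule ℤ E) [DiscreteTopology L]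
    [IsZLattice ℝ L] {x : E} :
    x ∈ L ↔ ∀ β, (∀ y ∈ L, ∃ n : ℤ, ⟪β, y⟫ = n) → ∃ n : ℤ, ⟪x, β⟫ = n := by
  let bL := Module.Free.chooseBasis ℤ L
  have hbL := bL.ofZLatticeBasis_span ℝ L
  conv_lhs => rw [← hbL, ← LinearMap.BilinForm.dualSubmodule_dualSubmodule_of_basis _
    nondegenerate_innerₗ (LinearMap.BilinForm.isSymm_iff.mpr isSymm_inner)
    (bL.ofZLatticeBasis ℝ L), hbL]
  simp only [mem_dualSubmodule_innerₗ_iff]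

theorem mem_iff_forall_inner_int_of_discreteTopology (L : Submodule ℤ E) [DiscreteTopology L]
    {x : E} :
    x ∈ L ↔ x ∈ Submodule.span ℝ (L : Set E) ∧ ∀ β ∈ Submodule.span ℝ (L : Set E),
      (∀ y ∈ L, ∃ n : ℤ, ⟪β, y⟫ = n) → ∃ n : ℤ, ⟪x, β⟫ = n := by
  set W := Submodule.span ℝ (L : Set E)
  let LW : Submodule ℤ W := ZLattice.comap ℝ L W.subtype
  have : DiscreteTopology LW :=
    ZLattice.comap_discreteTopology ℝ L continuous_subtype_val Subtype.val_injective
  have : IsZLattice ℝ LW := ⟨by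
    rw [ZLattice.coe_comap, Submodule.span_preimage_eq ⟨0, L.zero_mem⟩ (by
      rw [Submodule.range_subtype]; exact Submodule.subset_span), Submodule.comap_subtype_self]⟩
  constructor
  · intro hx
    refine ⟨Submodule.subset_span hx, fun β _ hβ => ?_⟩
    obtain ⟨n, hn⟩ := hβ x hx
    exact ⟨n, by rw [real_inner_comm, hn]⟩
  · rintro ⟨hxW, hx⟩
    refine (ZLattice.mem_iff_forall_inner_int LW (x := ⟨x, hxW⟩)).mpr ?_
    rintro ⟨β, hβW⟩ hβ
    exact hx β hβW fun y hy => hβ ⟨y, Submodule.subset_span hy⟩ hy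

end DualLattice

section Averaging

variable {V : Type*} [NormedAddCommGroup V] [InnerProductSpace ℝ V] {ω : V ≃ₗᵢ[ℝ] V} {N : ℕ}

theorem inner_average_of_apply_eq (hN : N ≠ 0) {β : V} (hβ : ω β = β) (v : V) :
    ⟪β, Module.End.average (ω : Module.End ℝ V) N v⟫ = ⟪β, v⟫ := by
  have hterm : ∀ i, ⟪β, ((ω : Module.End ℝ V) ^ i) v⟫ = ⟪β, v⟫ := fun i => by
    have hβi := Module.End.pow_apply_of_apply_eq (f := (ω : Module.End ℝ V)) (by simpa) i
    rw [← ω.toLinearMap_pow] at hβi ⊢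
    conv_lhs => rw [← hβi]
    exact (ω ^ i).inner_map_map β v
  rw [Module.End.average_apply, inner_smul_right, inner_sum, sum_congr rfl fun i _ => hterm i,
    sum_const, card_range, nsmul_eq_mul, inv_mul_cancel_left₀ (Nat.cast_ne_zero.mpr hN)]

variable [FiniteDimensional ℝ V]

theorem image_average_eq_setOf_forall_inner_int (Γ : Submodule ℤ V) [DiscreteTopology Γ]
    [IsZLattice ℝ Γ] (hN : N ≠ 0) (hord : ω ^ N = 1) (hinv : ∀ v ∈ Γ, ω v ∈ Γ) :
    Module.End.average (ω : Module.End ℝ V) N '' Γ =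
      {x : V | ω x = x ∧ ∀ β : V, ω β = β →
        (∀ y ∈ Γ, ∃ n : ℤ, ⟪β, y⟫ = (n : ℝ)) → ∃ n : ℤ, ⟪x, β⟫ = (n : ℝ)} := by
  have hord' : (ω : Module.End ℝ V) ^ N = 1 := by
    rw [← ω.toLinearMap_pow, hord]; rfl
  let Λ := Γ.map ((Module.End.average (ω : Module.End ℝ V) N).restrictScalars ℤ)
  have hΛ : (Λ : Set V) = Module.End.average (ω : Module.End ℝ V) N '' Γ := Submodule.map_coe _ _
  have hNΛ : ∀ x ∈ (Λ : Set V), (N : ℝ) • x ∈ (Γ : Set V) := by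
    rintro _ ⟨v, hv, rfl⟩
    rw [LinearMap.restrictScalars_apply, Module.End.natCast_smul_average_apply hN]
    refine Γ.sum_mem fun i _ => ?_
    rw [Module.End.pow_apply]
    exact Set.MapsTo.iterate hinv i hv
  have : DiscreteTopology Λ := .of_smul_mem (Nat.cast_ne_zero.mpr hN) hNΛ
  have hspan : Submodule.span ℝ (Λ : Set V) =
      LinearMap.range (Module.End.average (ω : Module.End ℝ V) N) := by
    rw [hΛ, Submodule.span_image, IsZLattice.span_top, Submodule.map_top]
  have hdual : ∀ β, ω β = β →
      ((∀ y ∈ Λ, ∃ n : ℤ, ⟪β, y⟫ = n) ↔ ∀ y ∈ Γ, ∃ n : ℤ, ⟪β, y⟫ = n) := fun β hβ => by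
    simp only [← SetLike.mem_coe, hΛ, Set.forall_mem_image, inner_average_of_apply_eq hN hβ]
  ext x
  rw [← hΛ, SetLike.mem_coe, mem_iff_forall_inner_int_of_discreteTopology, hspan]
  simp only [Module.End.mem_range_average_iff hN hord', Set.mem_ofPred_eq]
  exact and_congr .rfl <| forall_congr' fun β => forall_congr' fun hβ => imp_congr_left (hdual β hβ)

end Averaging

/-- Let `V` be a finite-dimensional real inner product space, `ω` a linear isometry of `V`
with `ω^N = id` (`N ≥ 1`), and `Γ` a lattice in `V` (the `ℤ`-span of an `ℝ`-basis `b`)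
with `ω(Γ) = Γ`.  Then the image of `Γ` under the orthogonal projection
`P = (1/N)(id + ω + ⋯ + ω^{N−1})` onto the fixed subspace `V_ω` equals the set of
`ω`-fixed vectors `x` such that `(x, β) ∈ ℤ` for every `ω`-fixed `β ∈ Γ^∨`; i.e. `P`
restricts to a surjection from `Γ` onto the lattice in `V_ω` dual to the fixed sublattice
`(Γ^∨)_ω = Γ^∨ ∩ V_ω`. -/
theorem image_of_lattice_under_averaging
    {V : Type*} [NormedAddCommGroup V] [InnerProductSpace ℝ V] [FiniteDimensional ℝ V]
    {ι : Type*} [Fintype ι] (b : Module.Basis ι ℝ V)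
    (Γ : Submodule ℤ V) (hΓ : Γ = Submodule.span ℤ (Set.range b))
    (ω : V ≃ₗᵢ[ℝ] V) (N : ℕ) (hN : 1 ≤ N) (hord : ω ^ N = 1)
    (hinv : ∀ v : V, v ∈ Γ ↔ ω v ∈ Γ) :
    (fun v : V => (N : ℝ)⁻¹ • ∑ i ∈ Finset.range N, (ω ^ i) v) '' (Γ : Set V) =
      {x : V | ω x = x ∧ ∀ β : V, ω β = β →
        (∀ y ∈ Γ, ∃ n : ℤ, ⟪β, y⟫ = (n : ℝ)) → ∃ n : ℤ, ⟪x, β⟫ = (n : ℝ)} := by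
  subst hΓ
  have hP : (fun v : V => (N : ℝ)⁻¹ • ∑ i ∈ Finset.range N, (ω ^ i) v) =
      Module.End.average (ω : Module.End ℝ V) N := by
    funext v
    simp only [Module.End.average_apply, ← ω.toLinearMap_pow]
    rfl
  rw [hP]
  exact image_average_eq_setOf_forall_inner_int _ (Nat.one_le_iff_ne_zero.mp hN) hord
    fun v => (hinv v).mp
end

section
/- Let V be a finite-dimensional real inner product space with basis (e_i)_{i∈I} indexed by a finite set I, and let (f_i)_{i∈I} be the dual basis characterized by (e_i, f_j) = δ_{ij}. Let σ be a permutation of I such that the linear map determined by e_i ↦ e_{σ(i)} is an isometry of V (then it also maps f_i to f_{σ(i)}). For i ∈ I let n_i denote the cardinality of the σ-orbit of i. Then the set {x ∈ V : x is fixed by the isometry and (x, β) ∈ ℤ for every β = ∑_i β_i f_i with all β_i ∈ ℤ and β_{σ(i)} = β_i} equals the set {∑_i λ_i e_i : λ_{σ(i)} = λ_i for all i, and n_i λ_i ∈ ℤ for all i}. -/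
/-!
Pairing with the dual basis reads off coordinates: `⟪x, ∑ βᵢ fᵢ⟫ = ∑ βᵢ λᵢ` with `λ = e.repr x`,
and `ω x = x` says exactly that `λ` is `σ`-invariant. Pairing an invariant `λ` with the indicator
of the `σ`-orbit of `i` gives `nᵢ λᵢ`; conversely, for invariant `β` the sum `∑ βᵢ λᵢ` splits over
the orbits into the integers `βᵢ (nᵢ λᵢ)`.
-/

open scoped RealInnerProductSpace
open Finset

theorem Setoid.exists_int_sum_eq_of_card_mul {ι R : Type*} [Fintype ι] [Ring R] (s : Setoid ι)
    (a : ι → R) (ha : ∀ i j, s i j → a i = a j)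
    (hint : ∀ i, ∃ m : ℤ, (Nat.card {j // s i j} : R) * a i = m) :
    ∃ m : ℤ, ∑ i, a i = m := by
  classical
  choose m hm using hint
  refine ⟨∑ c : Quotient s, m c.out, ?_⟩
  rw [← Fintype.sum_fiberwise (Quotient.mk s) a]
  push_cast
  refine sum_congr rfl fun c _ => ?_
  have hclass : ∀ i, Quotient.mk s i = c ↔ s c.out i := fun i => by
    rw [Quotient.mk_eq_iff_out]; exact ⟨Setoid.symm, Setoid.symm⟩
  rw [← hm, sum_eq_card_nsmul fun i _ => (ha _ _ ((hclass i.1).1 i.2)).symm,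
    card_univ, nsmul_eq_mul, ← Nat.card_eq_fintype_card,
    Nat.card_congr (Equiv.subtypeEquivRight hclass)]

namespace Equiv.Perm

variable {α : Type*}

theorem sameCycle_iff_exists_nat_pow_eq [Finite α] {σ : Perm α} {x y : α} :
    σ.SameCycle x y ↔ ∃ k : ℕ, (σ ^ k) x = y :=
  ⟨SameCycle.exists_nat_pow_eq, fun ⟨k, h⟩ => ⟨k, by simpa using h⟩⟩

theorem SameCycle.apply_eq_of_forall_apply_eq {β : Type*} {σ : Perm α} {g : α → β}
    (hg : ∀ i, g (σ i) = g i) {x y : α} (h : σ.SameCycle x y) : g x = g y := by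
  obtain ⟨k, rfl⟩ := h
  induction k using Int.induction_on with
  | zero => rfl
  | succ k ih => rw [add_comm, zpow_one_add, mul_apply, hg, ih]
  | pred k ih =>
    have hg_inv : ∀ i, g (σ⁻¹ i) = g i := fun i => by simpa using (hg (σ⁻¹ i)).symm
    rw [sub_eq_neg_add, zpow_add, zpow_neg_one, mul_apply, hg_inv, ih]

theorem forall_exists_int_sum_mul_iff {R : Type*} [Fintype α] [Ring R] (σ : Perm α) (lam : α → R)
    (hlam : ∀ i, lam (σ i) = lam i) :
    (∀ β : α → ℤ, (∀ i, β (σ i) = β i) → ∃ n : ℤ, ∑ i, (β i : R) * lam i = n) ↔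
      ∀ i, ∃ m : ℤ, (Nat.card {j // σ.SameCycle i j} : R) * lam i = m := by
  classical
  constructor
  · intro hint i
    obtain ⟨n, hn⟩ := hint (fun j => if σ.SameCycle i j then 1 else 0) (by simp)
    refine ⟨n, ?_⟩
    have horbit : ∀ j ∈ univ.filter (σ.SameCycle i), lam j = lam i := fun j hj =>
      ((mem_filter.1 hj).2.apply_eq_of_forall_apply_eq hlam).symm
    rw [← hn, Nat.card_eq_fintype_card, Fintype.card_subtype, ← nsmul_eq_mul,
      ← sum_eq_card_nsmul horbit, sum_filter]
    simp
  · intro hcard β hβ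
    apply Setoid.exists_int_sum_eq_of_card_mul (SameCycle.setoid σ)
    · intro i j hij
      rw [hij.apply_eq_of_forall_apply_eq hβ, hij.apply_eq_of_forall_apply_eq hlam]
    · intro i
      obtain ⟨m, hm⟩ := hcard i
      refine ⟨β i * m, ?_⟩
      rw [Int.cast_mul, ← hm, ← mul_assoc, ← mul_assoc, (Int.cast_commute _ _).eq]
      rfl

end Equiv.Perm

theorem Module.Basis.repr_apply_perm_of_apply_eq {ι R M : Type*} [CommSemiring R]
    [AddCommMonoid M] [Module R M] {F : Type*} [FunLike F M M] [LinearMapClass F R M M]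
    (e : Module.Basis ι R M)
    {σ : Equiv.Perm ι} {g : F} (hg : ∀ i, g (e i) = e (σ i)) (x : M) (j : ι) :
    e.repr (g x) (σ j) = e.repr x j := by
  refine LinearMap.congr_fun
    (e.ext (f₁ := (e.coord (σ j)).comp (g : M →ₗ[R] M)) (f₂ := e.coord j) fun i => ?_) x
  simp [hg, Finsupp.single_apply_left σ.injective]

theorem Module.Basis.apply_eq_self_iff_repr_perm {ι R M : Type*} [CommSemiring R]
    [AddCommMonoid M] [Module R M] {F : Type*} [FunLike F M M] [LinearMapClass F R M M]
    (e : Module.Basis ι R M)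
    {σ : Equiv.Perm ι} {g : F} (hg : ∀ i, g (e i) = e (σ i)) (x : M) :
    g x = x ↔ ∀ j, e.repr x (σ j) = e.repr x j := by
  rw [← e.repr.injective.eq_iff, Finsupp.ext_iff, ← σ.forall_congr_right]
  simp only [e.repr_apply_perm_of_apply_eq hg, eq_comm]

section DualBasis

variable {V ι : Type*} [NormedAddCommGroup V] [InnerProductSpace ℝ V] [DecidableEq ι]
  {e : Module.Basis ι ℝ V} {f : ι → V}

theorem inner_dual_eq_repr (hdual : ∀ i j, ⟪e i, f j⟫ = if i = j then (1 : ℝ) else 0)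
    (x : V) (j : ι) : ⟪x, f j⟫ = e.repr x j := by
  refine LinearMap.congr_fun
    (e.ext (f₁ := (innerₗ V).flip (f j)) (f₂ := e.coord j) fun i => ?_) x
  simp only [LinearMap.flip_apply, innerₗ_apply_apply, Module.Basis.coord_apply, e.repr_self,
    Finsupp.single_apply, hdual]

theorem LinearIsometryEquiv.apply_dual_eq_of_apply_basis_eq
    (hdual : ∀ i j, ⟪e i, f j⟫ = if i = j then (1 : ℝ) else 0) {σ : Equiv.Perm ι}
    (ω : V ≃ₗᵢ[ℝ] V) (hω : ∀ i, ω (e i) = e (σ i)) (i : ι) : ω (f i) = f (σ i) := by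
  refine ext_inner_left ℝ fun x => ?_
  calc ⟪x, ω (f i)⟫ = ⟪ω.symm x, f i⟫ := by rw [← ω.inner_map_map (ω.symm x), ω.apply_symm_apply]
    _ = e.repr (ω (ω.symm x)) (σ i) := by
      rw [inner_dual_eq_repr hdual, e.repr_apply_perm_of_apply_eq hω]
    _ = ⟪x, f (σ i)⟫ := by rw [ω.apply_symm_apply, inner_dual_eq_repr hdual]

end DualBasis

theorem fractional_symmetric_weight_lattice_eq_general
    {V : Type*} [NormedAddCommGroup V] [InnerProductSpace ℝ V]
    {ι : Type*} [Fintype ι] [DecidableEq ι]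
    (e : Module.Basis ι ℝ V) (f : ι → V)
    (hdual : ∀ i j, ⟪e i, f j⟫ = if i = j then (1 : ℝ) else 0)
    (σ : Equiv.Perm ι) (ω : V ≃ₗᵢ[ℝ] V) (hω : ∀ i, ω (e i) = e (σ i)) :
    (∀ i, ω (f i) = f (σ i)) ∧
    {x : V | ω x = x ∧ ∀ β : ι → ℤ, (∀ i, β (σ i) = β i) →
        ∃ n : ℤ, ⟪x, ∑ i, (β i : ℝ) • f i⟫ = (n : ℝ)} =
      {x : V | ∃ lam : ι → ℝ, (∀ i, lam (σ i) = lam i) ∧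
        (∀ i, ∃ m : ℤ, (Nat.card {j : ι | ∃ k : ℕ, (σ ^ k) i = j} : ℝ) * lam i = (m : ℝ)) ∧
        x = ∑ i, lam i • e i} := by
  refine ⟨ω.apply_dual_eq_of_apply_basis_eq hdual hω, ?_⟩
  ext x
  have hpair (β : ι → ℤ) : ⟪x, ∑ i, (β i : ℝ) • f i⟫ = ∑ i, (β i : ℝ) * e.repr x i := by
    simp only [inner_sum, real_inner_smul_right, inner_dual_eq_repr hdual]
  have hfix : ω x = x ↔ ∀ i, e.repr x (σ i) = e.repr x i :=
    e.apply_eq_self_iff_repr_perm hω x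
  simp only [Set.mem_ofPred_eq, hpair, hfix, ← Equiv.Perm.sameCycle_iff_exists_nat_pow_eq]
  constructor
  · rintro ⟨hsym, hint⟩
    exact ⟨e.repr x, hsym, (σ.forall_exists_int_sum_mul_iff _ hsym).1 hint, (e.sum_repr x).symm⟩
  · rintro ⟨lam, hsym, hint, rfl⟩
    simp only [e.repr_sum_self]
    exact ⟨hsym, (σ.forall_exists_int_sum_mul_iff lam hsym).2 hint⟩

/-- Let `V` be a finite-dimensional real inner product space with basis `(e i)` and dual
basis `(f i)` characterised by `(e i, f j) = δᵢⱼ`.  Let `σ` be a permutation of the index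
set such that `e i ↦ e (σ i)` extends to a linear isometry `ω` of `V`.  Then `ω` also
maps `f i` to `f (σ i)`, and the set of `ω`-fixed vectors `x` with `(x, β) ∈ ℤ` for every
symmetric integral coroot `β = ∑ βᵢ f i` (with `βᵢ ∈ ℤ`, `β_{σ i} = βᵢ`) equals the
fractional symmetric weight lattice
`{∑ λᵢ e i | λ_{σ i} = λᵢ and nᵢ λᵢ ∈ ℤ}`, where `nᵢ` is the length of the `σ`-orbit of
`i`. -/
theorem fractional_symmetric_weight_lattice_eq
    {V : Type*} [NormedAddCommGroup V] [InnerProductSpace ℝ V] [FiniteDimensional ℝ V]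
    {ι : Type*} [Fintype ι] [DecidableEq ι]
    (e : Module.Basis ι ℝ V) (f : ι → V)
    (hdual : ∀ i j, ⟪e i, f j⟫ = if i = j then (1 : ℝ) else 0)
    (σ : Equiv.Perm ι) (ω : V ≃ₗᵢ[ℝ] V) (hω : ∀ i, ω (e i) = e (σ i)) :
    (∀ i, ω (f i) = f (σ i)) ∧
    {x : V | ω x = x ∧ ∀ β : ι → ℤ, (∀ i, β (σ i) = β i) →
        ∃ n : ℤ, ⟪x, ∑ i, (β i : ℝ) • f i⟫ = (n : ℝ)} =
      {x : V | ∃ lam : ι → ℝ, (∀ i, lam (σ i) = lam i) ∧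
        (∀ i, ∃ m : ℤ, (Nat.card {j : ι | ∃ k : ℕ, (σ ^ k) i = j} : ℝ) * lam i = (m : ℝ)) ∧
        x = ∑ i, lam i • e i} :=
  fractional_symmetric_weight_lattice_eq_general e f hdual σ ω hω
end

section
/- Let V be a finite-dimensional real inner product space, W a finite group acting on V by linear isometries, ε : W → {±1} a group homomorphism, h a positive integer, and Λ a lattice in V with w(Λ) = Λ for all w ∈ W. Fix a ∈ Λ^∨ and define g : V → ℂ by g(ν) = ∑_{w ∈ W} ε(w) e^{−2πi (w(a), ν)/h}. If ν ∈ V is fixed by some affine transformation ν ↦ w₀(ν) + hβ with w₀ ∈ W, β ∈ Λ and ε(w₀) = −1 (i.e. w₀(ν) + hβ = ν), then g(ν) = 0. -/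
open scoped RealInnerProductSpace
open Complex

/-! The affine map `ν ↦ w₀ ν + h β` fixes `ν`, and since `a` pairs integrally with `Λ` (a property
inherited by every `w a`), each character `ν ↦ e^{−2πi (w a, ν)/h}` is unchanged when `ν` is
replaced by `w₀ ν + h β`.  Hence the summand at `w₀ w` equals the summand at `w` up to the sign
`ε(w₀) = −1`, and reindexing the sum by `w ↦ w₀ w` gives `g(ν) = −g(ν)`. -/

theorem sum_zsmul_eq_zero_of_mul_left_invariant_of_sign_neg_one
    {W M : Type*} [Group W] [Fintype W] [AddCommGroup M] [IsAddTorsionFree M]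
    (ε : W →* ℤˣ) {w₀ : W} (hε : ε w₀ = -1) {f : W → M} (hf : ∀ w, f (w₀ * w) = f w) :
    ∑ w, (ε w : ℤ) • f w = 0 := by
  rw [← self_eq_neg]
  calc ∑ w, (ε w : ℤ) • f w = ∑ w, (ε (w₀ * w) : ℤ) • f (w₀ * w) :=
        (Equiv.sum_comp (Equiv.mulLeft w₀) fun w => (ε w : ℤ) • f w).symm
    _ = -∑ w, (ε w : ℤ) • f w := by simp [hε, hf]

theorem exists_inner_map_eq_intCast
    {V W : Type*} [NormedAddCommGroup V] [InnerProductSpace ℝ V] [Group W]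
    {ρ : W →* (V ≃ₗᵢ[ℝ] V)} {Λ : Submodule ℤ V} (hinv : ∀ w, ∀ v ∈ Λ, ρ w v ∈ Λ)
    {a : V} (ha : ∀ y ∈ Λ, ∃ n : ℤ, ⟪a, y⟫ = n) (w : W) {β : V} (hβ : β ∈ Λ) :
    ∃ n : ℤ, ⟪ρ w a, β⟫ = n := by
  obtain ⟨n, hn⟩ := ha _ (hinv w⁻¹ β hβ)
  refine ⟨n, ?_⟩
  rw [← hn, ← (ρ w⁻¹).inner_map_map, ← Function.comp_apply (f := ρ w⁻¹),
    ← LinearIsometryEquiv.coe_mul, ← map_mul, inv_mul_cancel, map_one]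
  rfl

theorem exp_inner_add_nsmul_eq_of_inner_eq_intCast
    {V : Type*} [NormedAddCommGroup V] [InnerProductSpace ℝ V]
    {x β : V} {n : ℤ} (hn : ⟪x, β⟫ = n) (h : ℕ) (ν : V) :
    exp (-(2 * (Real.pi : ℂ) * I) * (⟪x, ν + (h : ℝ) • β⟫ : ℂ) / (h : ℂ)) =
      exp (-(2 * (Real.pi : ℂ) * I) * (⟪x, ν⟫ : ℂ) / (h : ℂ)) := by
  rcases eq_or_ne h 0 with rfl | hh
  · simp
  have hhC : (h : ℂ) ≠ 0 := Nat.cast_ne_zero.mpr hh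
  rw [inner_add_right, real_inner_smul_right, hn]
  push_cast
  rw [show -(2 * (Real.pi : ℂ) * I) * ((⟪x, ν⟫ : ℂ) + (h : ℂ) * (n : ℂ)) / (h : ℂ) =
      -(2 * (Real.pi : ℂ) * I) * (⟪x, ν⟫ : ℂ) / (h : ℂ) + ((-n : ℤ) : ℂ) * (2 * Real.pi * I) by
    push_cast; field_simp; ring]
  rw [exp_add, exp_int_mul_two_pi_mul_I, mul_one]

theorem twisted_sum_vanishes_on_boundary_general
    {V : Type*} [NormedAddCommGroup V] [InnerProductSpace ℝ V]
    {W : Type*} [Group W] [Fintype W]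
    (ρ : W →* (V ≃ₗᵢ[ℝ] V)) (ε : W →* ℤˣ)
    (h : ℕ)
    (Λ : Submodule ℤ V)
    (hinv : ∀ (w : W) (v : V), v ∈ Λ ↔ ρ w v ∈ Λ)
    (a : V) (ha : ∀ y ∈ Λ, ∃ n : ℤ, ⟪a, y⟫ = (n : ℝ))
    (g : V → ℂ)
    (hg : ∀ ν : V, g ν = ∑ w : W, ((ε w : ℤ) : ℂ) *
        Complex.exp (-(2 * (Real.pi : ℂ) * Complex.I) * (⟪ρ w a, ν⟫ : ℂ) / (h : ℂ))) :
    ∀ (w₀ : W) (β : V), β ∈ Λ → ε w₀ = -1 → ∀ ν : V,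
      ρ w₀ ν + (h : ℝ) • β = ν → g ν = 0 := by
  intro w₀ β hβ hε ν hν
  simp only [hg, ← zsmul_eq_mul]
  refine sum_zsmul_eq_zero_of_mul_left_invariant_of_sign_neg_one ε hε fun w => ?_
  obtain ⟨n, hn⟩ := exists_inner_map_eq_intCast (fun w v => (hinv w v).mp) ha (w₀ * w) hβ
  calc exp (-(2 * (Real.pi : ℂ) * I) * (⟪ρ (w₀ * w) a, ν⟫ : ℂ) / (h : ℂ))
      = exp (-(2 * (Real.pi : ℂ) * I) * (⟪ρ (w₀ * w) a, ρ w₀ ν + (h : ℝ) • β⟫ : ℂ) / (h : ℂ)) := by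
        rw [hν]
    _ = exp (-(2 * (Real.pi : ℂ) * I) * (⟪ρ (w₀ * w) a, ρ w₀ ν⟫ : ℂ) / (h : ℂ)) :=
        exp_inner_add_nsmul_eq_of_inner_eq_intCast hn h _
    _ = exp (-(2 * (Real.pi : ℂ) * I) * (⟪ρ w a, ν⟫ : ℂ) / (h : ℂ)) := by
        rw [map_mul, LinearIsometryEquiv.coe_mul, Function.comp_apply,
          LinearIsometryEquiv.inner_map_map]

/-- Let `V` be a finite-dimensional real inner product space, `W` a finite group acting
on `V` by linear isometries (via `ρ`), `ε : W → {±1}` a group homomorphism, `h` a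
positive integer, and `Λ` a lattice in `V` (the `ℤ`-span of an `ℝ`-basis `b`) with
`w(Λ) = Λ` for all `w ∈ W`.  Fix `a ∈ Λ^∨` and define
`g(ν) = ∑_{w ∈ W} ε(w) e^{−2πi (w a, ν)/h}`.  If `ν ∈ V` is fixed by an affine
transformation `ν ↦ w₀ ν + h β` with `w₀ ∈ W`, `β ∈ Λ` and `ε(w₀) = −1`, then
`g(ν) = 0`. -/
theorem twisted_sum_vanishes_on_boundary
    {V : Type*} [NormedAddCommGroup V] [InnerProductSpace ℝ V] [FiniteDimensional ℝ V]
    {ι : Type*} [Fintype ι] (b : Module.Basis ι ℝ V)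
    {W : Type*} [Group W] [Fintype W]
    (ρ : W →* (V ≃ₗᵢ[ℝ] V)) (ε : W →* ℤˣ)
    (h : ℕ) (hh : 0 < h)
    (Λ : Submodule ℤ V) (hΛ : Λ = Submodule.span ℤ (Set.range b))
    (hinv : ∀ (w : W) (v : V), v ∈ Λ ↔ ρ w v ∈ Λ)
    (a : V) (ha : ∀ y ∈ Λ, ∃ n : ℤ, ⟪a, y⟫ = (n : ℝ))
    (g : V → ℂ)
    (hg : ∀ ν : V, g ν = ∑ w : W, ((ε w : ℤ) : ℂ) *
        Complex.exp (-(2 * (Real.pi : ℂ) * Complex.I) * (⟪ρ w a, ν⟫ : ℂ) / (h : ℂ))) :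
    ∀ (w₀ : W) (β : V), β ∈ Λ → ε w₀ = -1 → ∀ ν : V,
      ρ w₀ ν + (h : ℝ) • β = ν → g ν = 0 :=
  twisted_sum_vanishes_on_boundary_general ρ ε h Λ hinv a ha g hg
end

section
/- Let V be a finite-dimensional real inner product space, W a finite group acting on V by linear isometries, ε : W → {±1} a group homomorphism, h a positive integer, and Λ a lattice in V with w(Λ) = Λ for all w ∈ W. Let M be a finite W-invariant multiset of elements of Λ^∨ and a, b ∈ Λ^∨, and define f(ν) = ∑_{j ∈ M} ∑_{w₁, w₂ ∈ W} ε(w₁) ε(w₂) e^{−2πi (j + w₁(a) − w₂(b), ν)/h}. If ν ∈ V satisfies w₀(ν) + hβ = ν for some w₀ ∈ W and β ∈ Λ with ε(w₀) = −1, then f(ν) = 0. -/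
open scoped RealInnerProductSpace
open Complex
open scoped Real

/-!
Fix `j` and `w₂` and view the inner sum as a function `F` of `w₁`. Since
`ν = w₀ ν + h β`, the pairing `(w₀ w₁ a, ν)` exceeds `(w₁ a, ν)` by `h (w₀ w₁ a, β)`, and
`(w₀ w₁ a, β)` is an integer because `a ∈ Λ^∨` and `Λ` is `W`-stable. So the exponential is
unchanged under `w₁ ↦ w₀ w₁` while the sign `ε` flips: `F (w₀ w₁) = -F w₁`, and summing over
the group gives `∑ F = -∑ F`.
-/

theorem Fintype.sum_eq_zero_of_mul_left_eq_neg {G M : Type*} [Group G] [Fintype G]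
    [AddCommGroup M] [IsAddTorsionFree M] {F : G → M} (g : G) (hF : ∀ x, F (g * x) = -F x) :
    ∑ x, F x = 0 := by
  rw [← self_eq_neg, ← Finset.sum_neg_distrib]
  simp_rw [← hF]
  exact (Equiv.sum_comp (Equiv.mulLeft g) F).symm

theorem Complex.exp_neg_two_pi_I_mul_add_mul_int_div (x : ℝ) (h : ℕ) (n : ℤ) :
    exp (-(2 * π * I) * ((x + h * n : ℝ) : ℂ) / h) = exp (-(2 * π * I) * x / h) := by
  rcases eq_or_ne h 0 with rfl | hh
  · simp -- both sides are `exp 0`, as division by `0` is `0`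
  have hh' : (h : ℂ) ≠ 0 := Nat.cast_ne_zero.mpr hh
  rw [show -(2 * π * I) * ((x + h * n : ℝ) : ℂ) / h
      = -(2 * π * I) * x / h + (-n : ℤ) * (2 * π * I) by
        push_cast; field_simp; ring,
    exp_add, exp_int_mul_two_pi_mul_I, mul_one]

section InnerProduct

variable {V : Type*} [NormedAddCommGroup V] [InnerProductSpace ℝ V]

theorem LinearIsometryEquiv.inner_map_eq_of_map_add_smul_eq (e : V ≃ₗᵢ[ℝ] V) (x : V)
    {ν β : V} {c : ℝ} (hν : e ν + c • β = ν) : ⟪e x, ν⟫ = ⟪x, ν⟫ + c * ⟪e x, β⟫ := by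
  conv_lhs => rw [← hν]
  rw [inner_add_right, e.inner_map_map, real_inner_smul_right]

theorem LinearIsometryEquiv.exists_int_inner_map_eq {Λ : Submodule ℤ V} (e : V ≃ₗᵢ[ℝ] V)
    (he : ∀ v, v ∈ Λ ↔ e v ∈ Λ) {a : V} (ha : ∀ y ∈ Λ, ∃ n : ℤ, ⟪a, y⟫ = n)
    {β : V} (hβ : β ∈ Λ) : ∃ n : ℤ, ⟪e a, β⟫ = n := by
  obtain ⟨n, hn⟩ := ha (e.symm β) ((he _).2 (by simpa using hβ))
  exact ⟨n, by rw [e.inner_map_eq_flip, hn]⟩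

end InnerProduct

theorem twisted_fusion_function_vanishes_on_boundary_general
    {V : Type*} [NormedAddCommGroup V] [InnerProductSpace ℝ V]
    {W : Type*} [Group W] [Fintype W]
    (ρ : W →* (V ≃ₗᵢ[ℝ] V)) (ε : W →* ℤˣ)
    (h : ℕ)
    (Λ : Submodule ℤ V)
    (hinv : ∀ (w : W) (v : V), v ∈ Λ ↔ ρ w v ∈ Λ)
    (M : Multiset V)
    (a b : V) (ha : ∀ y ∈ Λ, ∃ n : ℤ, ⟪a, y⟫ = (n : ℝ))
    (f : V → ℂ)
    (hf : ∀ ν : V, f ν = (M.map fun j => ∑ w₁ : W, ∑ w₂ : W,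
        ((ε w₁ : ℤ) : ℂ) * ((ε w₂ : ℤ) : ℂ) *
          Complex.exp (-(2 * (Real.pi : ℂ) * Complex.I) *
            (⟪j + ρ w₁ a - ρ w₂ b, ν⟫ : ℂ) / (h : ℂ))).sum) :
    ∀ (w₀ : W) (β : V), β ∈ Λ → ε w₀ = -1 → ∀ ν : V,
      ρ w₀ ν + (h : ℝ) • β = ν → f ν = 0 := by
  intro w₀ β hβ hε ν hν
  rw [hf]
  refine Multiset.sum_eq_zero fun _ hx => ?_
  obtain ⟨j, -, rfl⟩ := Multiset.mem_map.1 hx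
  rw [Finset.sum_comm]
  refine Finset.sum_eq_zero fun w₂ _ => Fintype.sum_eq_zero_of_mul_left_eq_neg w₀ fun w₁ => ?_
  obtain ⟨n, hn⟩ := (ρ (w₀ * w₁)).exists_int_inner_map_eq (hinv _) ha hβ
  have hshift : ⟪j + ρ (w₀ * w₁) a - ρ w₂ b, ν⟫ = ⟪j + ρ w₁ a - ρ w₂ b, ν⟫ + h * n := by
    simp only [map_mul, LinearIsometryEquiv.coe_mul, Function.comp_apply] at hn ⊢
    rw [inner_sub_left, inner_add_left, (ρ w₀).inner_map_eq_of_map_add_smul_eq _ hν, hn,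
      inner_sub_left, inner_add_left]
    ring
  rw [hshift, exp_neg_two_pi_I_mul_add_mul_int_div, map_mul, hε]
  push_cast
  ring

/-- Let `V` be a finite-dimensional real inner product space, `W` a finite group acting
on `V` by linear isometries (via `ρ`), `ε : W → {±1}` a group homomorphism, `h` a
positive integer, and `Λ` a lattice in `V` (the `ℤ`-span of an `ℝ`-basis `b`) with
`w(Λ) = Λ` for all `w ∈ W`.  Let `M` be a finite multiset of elements of `Λ^∨` invariant
(with multiplicities) under `W`, and let `a, b ∈ Λ^∨`.  Define
`f(ν) = ∑_{j ∈ M} ∑_{w₁, w₂ ∈ W} ε(w₁) ε(w₂) e^{−2πi (j + w₁ a − w₂ b, ν)/h}`.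
If `ν ∈ V` satisfies `w₀ ν + h β = ν` for some `w₀ ∈ W` and `β ∈ Λ` with `ε(w₀) = −1`,
then `f(ν) = 0`. -/
theorem twisted_fusion_function_vanishes_on_boundary
    {V : Type*} [NormedAddCommGroup V] [InnerProductSpace ℝ V] [FiniteDimensional ℝ V]
    {ι : Type*} [Fintype ι] (bV : Module.Basis ι ℝ V)
    {W : Type*} [Group W] [Fintype W]
    (ρ : W →* (V ≃ₗᵢ[ℝ] V)) (ε : W →* ℤˣ)
    (h : ℕ) (hh : 0 < h)
    (Λ : Submodule ℤ V) (hΛ : Λ = Submodule.span ℤ (Set.range bV))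
    (hinv : ∀ (w : W) (v : V), v ∈ Λ ↔ ρ w v ∈ Λ)
    (M : Multiset V) (hM : ∀ j ∈ M, ∀ y ∈ Λ, ∃ n : ℤ, ⟪j, y⟫ = (n : ℝ))
    (hMinv : ∀ w : W, M.map (⇑(ρ w)) = M)
    (a b : V) (ha : ∀ y ∈ Λ, ∃ n : ℤ, ⟪a, y⟫ = (n : ℝ))
    (hb : ∀ y ∈ Λ, ∃ n : ℤ, ⟪b, y⟫ = (n : ℝ))
    (f : V → ℂ)
    (hf : ∀ ν : V, f ν = (M.map fun j => ∑ w₁ : W, ∑ w₂ : W,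
        ((ε w₁ : ℤ) : ℂ) * ((ε w₂ : ℤ) : ℂ) *
          Complex.exp (-(2 * (Real.pi : ℂ) * Complex.I) *
            (⟪j + ρ w₁ a - ρ w₂ b, ν⟫ : ℂ) / (h : ℂ))).sum) :
    ∀ (w₀ : W) (β : V), β ∈ Λ → ε w₀ = -1 → ∀ ν : V,
      ρ w₀ ν + (h : ℝ) • β = ν → f ν = 0 :=
  twisted_fusion_function_vanishes_on_boundary_general ρ ε h Λ hinv M a b ha f hf
end

section
/- Let V be a real inner product space and ω a linear isometry of V. Let α ∈ V be a nonzero vector whose ω-orbit α, ω(α), …, ω^{m−1}(α) consists of m distinct, pairwise orthogonal vectors with ω^m(α) = α. Let s_x denote the orthogonal reflection s_x(λ) = λ − 2(λ,x)/(x,x) · x, and let ᾱ = (1/m)(α + ω(α) + ⋯ + ω^{m−1}(α)). Then for every λ ∈ V with ω(λ) = λ, the composition s_α ∘ s_{ω(α)} ∘ ⋯ ∘ s_{ω^{m−1}(α)} applied to λ equals λ − 2(λ, ᾱ)/(ᾱ, ᾱ) · ᾱ; that is, on ω-fixed vectors the product of the reflections inorbit of α acts as the orthogonal reflection in the projected vector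 ᾱ. -/
open scoped RealInnerProductSpace
open Complex

private lemma foldr_comp_aux {V : Type*} (s : ℕ → V → V) (l : List ℕ) (g : V → V) :
    l.foldr (fun k h => s k ∘ h) g = (l.foldr (fun k h => s k ∘ h) id) ∘ g := by
  induction l with
  | nil => rfl
  | cons a t ih => simp [List.foldr_cons, ih, Function.comp_assoc]

/-- Let `V` be a real inner product space and `ω` a linear isometry of `V`.  Let `α ≠ 0`
have an `ω`-orbit `α, ω α, …, ω^{m−1} α` of `m` distinct, pairwise orthogonal vectors
with `ω^m α = α`.  Denote by `s_x` the orthogonal reflection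
`s_x(λ) = λ − (2 (λ,x)/(x,x)) x` and let `ᾱ = (1/m)(α + ω α + ⋯ + ω^{m−1} α)`.  Then on
every `ω`-fixed vector `λ`, the composition `s_α ∘ s_{ω α} ∘ ⋯ ∘ s_{ω^{m−1} α}` acts as
the orthogonal reflection in the projected vector `ᾱ`:
`(s_α ∘ ⋯ ∘ s_{ω^{m−1} α})(λ) = λ − (2 (λ,ᾱ)/(ᾱ,ᾱ)) ᾱ`. -/
theorem orbit_reflections_act_as_projected_reflection
    {V : Type*} [NormedAddCommGroup V] [InnerProductSpace ℝ V]
    (ω : V ≃ₗᵢ[ℝ] V) (α : V) (hα : α ≠ 0) (m : ℕ) (hm : 1 ≤ m)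
    (horbit : (ω ^ m) α = α)
    (hdistinct : ∀ k < m, ∀ l < m, k ≠ l → (ω ^ k) α ≠ (ω ^ l) α)
    (horth : ∀ k < m, ∀ l < m, k ≠ l → ⟪(ω ^ k) α, (ω ^ l) α⟫ = (0 : ℝ))
    (s : V → V → V) (hs : ∀ x lam, s x lam = lam - (2 * ⟪lam, x⟫ / ⟪x, x⟫) • x)
    (abar : V) (habar : abar = (m : ℝ)⁻¹ • ∑ k ∈ Finset.range m, (ω ^ k) α) :
    ∀ lam : V, ω lam = lam →
      ((List.range m).foldr (fun k g => s ((ω ^ k) α) ∘ g) id) lam =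
        lam - (2 * ⟪lam, abar⟫ / ⟪abar, abar⟫) • abar := by
  intro lam hlam
  have hc : ⟪α, α⟫ ≠ (0:ℝ) := fun h => hα (inner_self_eq_zero.mp h)
  have hmR : (m : ℝ) ≠ 0 := Nat.cast_ne_zero.mpr (by omega)
  have hfix : ∀ k : ℕ, (ω ^ k) lam = lam := by
    intro k; induction k with
    | zero => rfl
    | succ n ih =>
        rw [pow_succ]
        show (ω ^ n) (ω lam) = lam
        rw [hlam, ih]
  have hinner : ∀ k : ℕ, ⟪lam, (ω ^ k) α⟫ = ⟪lam, α⟫ := by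
    intro k
    conv_lhs => rw [← hfix k]
    exact (ω ^ k).inner_map_map lam α
  have hnorm : ∀ k : ℕ, ⟪(ω ^ k) α, (ω ^ k) α⟫ = ⟪α, α⟫ := fun k => (ω ^ k).inner_map_map α α
  set t : ℝ := 2 * ⟪lam, α⟫ / ⟪α, α⟫ with ht
  have key : ∀ n, n ≤ m → ∀ w : V, (∀ k, k < n → ⟪w, (ω ^ k) α⟫ = 0) →
      ((List.range n).foldr (fun k g => s ((ω ^ k) α) ∘ g) id) (lam + w) =
        lam + w - ∑ k ∈ Finset.range n, t • (ω ^ k) α := by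
    intro n
    induction n with
    | zero => intro _ w _; simp
    | succ n ih =>
      intro hn w hw
      have hnm : n < m := hn
      rw [List.range_succ, List.foldr_append, List.foldr_cons, List.foldr_nil,
        foldr_comp_aux]
      have hsval : s ((ω ^ n) α) (lam + w) = lam + (w - t • (ω ^ n) α) := by
        rw [hs, inner_add_left, hw n (Nat.lt_succ_self n), hinner, hnorm]
        rw [add_zero]
        abel
      simp only [Function.comp_apply, id_eq]
      rw [hsval, ih (le_of_lt hn) (w - t • (ω ^ n) α) ?_]
      · rw [Finset.sum_range_succ]; abel
      · intro k hk
        rw [inner_sub_left, hw k (Nat.lt_succ_of_lt hk), real_inner_smul_left,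
          horth n hnm k (lt_of_lt_of_le hk (le_of_lt hn)) (by omega)]
        ring
  have hfinal := key m le_rfl 0 (fun k _ => by simp)
  simp only [add_zero] at hfinal
  rw [hfinal]
  congr 1
  rw [← Finset.smul_sum]
  -- compute inner products with abar
  have hla : ⟪lam, abar⟫ = ⟪lam, α⟫ := by
    rw [habar, real_inner_smul_right, inner_sum]
    simp only [hinner]
    rw [Finset.sum_const, Finset.card_range, nsmul_eq_mul]
    field_simp
  have haa : ⟪abar, abar⟫ = ⟪α, α⟫ / m := by
    rw [habar, real_inner_smul_right, real_inner_smul_left, sum_inner]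
    have : ∀ k ∈ Finset.range m, ⟪(ω ^ k) α, ∑ l ∈ Finset.range m, (ω ^ l) α⟫ = ⟪α, α⟫ := by
      intro k hk
      rw [inner_sum]
      rw [Finset.sum_eq_single k]
      · exact hnorm k
      · intro l hl hlk
        exact horth k (Finset.mem_range.mp hk) l (Finset.mem_range.mp hl) (Ne.symm hlk)
      · intro h; exact absurd hk h
    rw [Finset.sum_congr rfl this, Finset.sum_const, Finset.card_range, nsmul_eq_mul]
    field_simp
  rw [hla, haa, habar, smul_smul, ht]
  congr 1
  field_simp
end
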